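/- Let 0 < p ≤ 1, let L_m, L_j be integers with 2 ≤ L_m ≤ L_j, let α ≥ 0, β ∈ [0,1], let v be a natural number, and let V : ℕ → ℝ be nondecreasing and bounded. Then the discounted one-stage value of scheduling the shorter competing source is no larger than that of the longer one: α(v·L_m + L_m(L_m−1)/(2p)) + β·p·∑_{l} p_l^{(L_m)} V(v+l) ≤ α(v·L_j + L_j(L_j−1)/(2p)) + β·p·∑_{l} p_l^{(L_j)} V(v+l). -/
import Mathlib


/-- Shifted negative-binomial pmf. -/
noncomputable def pnb (p : ℝ) (L l : ℕ) : ℝ :=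
  if L ≤ l then ((l - 2).choose (L - 2) : ℝ) * p ^ (L - 1) * (1 - p) ^ (l - L) else 0

lemma pnb_nonneg {p : ℝ} (hp0 : 0 ≤ p) (hp1 : p ≤ 1) (L l : ℕ) : 0 ≤ pnb p L l := by
  unfold pnb
  split
  · exact mul_nonneg (mul_nonneg (by positivity) (pow_nonneg hp0 _))
      (pow_nonneg (by linarith) _)
  · exact le_rfl

lemma summable_pnb {p : ℝ} (hp0 : 0 < p) (hp1 : p ≤ 1) (L : ℕ) :
    Summable (pnb p L) := by
  rcases eq_or_lt_of_le hp1 with h1 | h1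
  · -- p = 1 : the pmf is supported on {L}
    apply summable_of_ne_finset_zero (s := {L})
    intro l hl
    simp only [Finset.mem_singleton] at hl
    unfold pnb
    split
    · rename_i h
      have : l - L ≠ 0 := by omega
      rw [← h1]
      simp [zero_pow this]
    · rfl
  · -- p < 1 : compare with a polynomial-times-geometric series
    set r : ℝ := 1 - p with hr
    have hr0 : 0 < r := by simp [hr]; linarith
    have hr1 : r < 1 := by simp [hr]; linarith
    have hsum : Summable (fun n : ℕ => (n : ℝ) ^ (L - 2) * r ^ n) :=
      summable_pow_mul_geometric_of_norm_lt_one (L - 2)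
        (by rw [Real.norm_eq_abs, abs_of_pos hr0]; exact hr1)
    have hle : ∀ l : ℕ, pnb p L l ≤ (p ^ (L - 1) / r ^ L) * ((l : ℝ) ^ (L - 2) * r ^ l) := by
      intro l
      unfold pnb
      split
      · rename_i h
        have hhl : ((l - 2).choose (L - 2) : ℝ) ≤ (l : ℝ) ^ (L - 2) := by
          calc ((l - 2).choose (L - 2) : ℝ) ≤ ((l - 2 : ℕ) : ℝ) ^ (L - 2) := by
                exact_mod_cast Nat.choose_le_pow (l - 2) (L - 2)
            _ ≤ (l : ℝ) ^ (L - 2) := by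
                apply pow_le_pow_left₀ (by positivity)
                exact_mod_cast Nat.sub_le l 2
        have hrl : r ^ (l - L) = r ^ l / r ^ L := by
          rw [eq_div_iff (by positivity), ← pow_add]
          congr 1
          omega
        rw [hrl]
        calc ((l - 2).choose (L - 2) : ℝ) * p ^ (L - 1) * (r ^ l / r ^ L)
            = ((l - 2).choose (L - 2) : ℝ) * (p ^ (L - 1) * r ^ l) / r ^ L := by ring
          _ ≤ (l : ℝ) ^ (L - 2) * (p ^ (L - 1) * r ^ l) / r ^ L := by
              apply div_le_div_of_nonneg_right ?_ (by positivity)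
              exact mul_le_mul_of_nonneg_right hhl (by positivity)
          _ = p ^ (L - 1) / r ^ L * ((l : ℝ) ^ (L - 2) * r ^ l) := by ring
      · positivity
    exact Summable.of_nonneg_of_le (fun l => pnb_nonneg hp0.le hp1 L l) hle (hsum.mul_left _)

lemma summable_pnb_mul {p : ℝ} (hp0 : 0 < p) (hp1 : p ≤ 1) (L : ℕ)
    {W : ℕ → ℝ} {M : ℝ} (hM : ∀ l, |W l| ≤ M) :
    Summable (fun l : ℕ => pnb p L l * W l) := by
  have hM0 : 0 ≤ M := le_trans (abs_nonneg _) (hM 0)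
  apply Summable.of_norm_bounded (g := fun l => pnb p L l * M)
    ((summable_pnb hp0 hp1 L).mul_right M)
  intro l
  rw [norm_mul, Real.norm_eq_abs, Real.norm_eq_abs,
    abs_of_nonneg (pnb_nonneg hp0.le hp1 L l)]
  exact mul_le_mul_of_nonneg_left (hM l) (pnb_nonneg hp0.le hp1 L l)

lemma pnb_rec (p : ℝ) {L : ℕ} (hL : 2 ≤ L) (l : ℕ) :
    pnb p (L + 1) (l + 1) = p * pnb p L l + (1 - p) * pnb p (L + 1) l := by
  obtain ⟨a, rfl⟩ : ∃ a, L = a + 2 := ⟨L - 2, by omega⟩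
  rcases Nat.lt_or_ge l (a + 2) with h | h
  · unfold pnb
    rw [if_neg (by omega), if_neg (by omega), if_neg (by omega)]
    ring
  rcases eq_or_lt_of_le h with rfl | h
  · unfold pnb
    rw [if_pos (by omega), if_pos (by omega), if_neg (by omega)]
    simp [Nat.choose_self]
    ring
  · obtain ⟨b, rfl⟩ : ∃ b, l = a + 3 + b := ⟨l - (a + 3), by omega⟩
    unfold pnb
    rw [if_pos (by omega), if_pos (by omega), if_pos (by omega)]
    have e1 : a + 3 + b + 1 - 2 = (a + 1 + b) + 1 := by omega
    have e2 : a + 3 - 2 = a + 1 := by omega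
    have e3 : a + 3 + b + 1 - (a + 3) = b + 1 := by omega
    have e4 : a + 3 + b - 2 = a + 1 + b := by omega
    have e5 : a + 2 - 2 = a := by omega
    have e6 : a + 3 + b - (a + 2) = b + 1 := by omega
    have e7 : a + 2 - 1 = a + 1 := by omega
    have e8 : a + 3 - 1 = a + 2 := by omega
    have e9 : a + 3 + b - (a + 3) = b := by omega
    rw [e1, e2, e3, e4, e5, e6, e7, e8, e9, Nat.choose_succ_succ]
    push_cast
    ring

lemma pnb_step {p : ℝ} (hp0 : 0 < p) (hp1 : p ≤ 1) {L : ℕ} (hL : 2 ≤ L)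
    (v : ℕ) {V : ℕ → ℝ} (hV : Monotone V) {M : ℝ} (hM : ∀ l, |V l| ≤ M) :
    ∑' l : ℕ, pnb p L l * V (v + l) ≤ ∑' l : ℕ, pnb p (L + 1) l * V (v + l) := by
  have hMs : ∀ (u : ℕ), ∀ l, |V (u + l)| ≤ M := fun u l => hM (u + l)
  have sumS : Summable (fun l : ℕ => pnb p L l * V (v + l)) :=
    summable_pnb_mul hp0 hp1 L (hMs v)
  have sumT : Summable (fun l : ℕ => pnb p (L + 1) l * V (v + l)) :=
    summable_pnb_mul hp0 hp1 (L + 1) (hMs v)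
  have sumA : Summable (fun l : ℕ => pnb p L l * V (v + 1 + l)) :=
    summable_pnb_mul hp0 hp1 L (hMs (v + 1))
  have sumB : Summable (fun l : ℕ => pnb p (L + 1) l * V (v + 1 + l)) :=
    summable_pnb_mul hp0 hp1 (L + 1) (hMs (v + 1))
  set S := ∑' l : ℕ, pnb p L l * V (v + l) with hS
  set T := ∑' l : ℕ, pnb p (L + 1) l * V (v + l) with hTdef
  set A := ∑' l : ℕ, pnb p L l * V (v + 1 + l) with hAdef
  set B := ∑' l : ℕ, pnb p (L + 1) l * V (v + 1 + l) with hBdef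
  have hp1' : 0 ≤ 1 - p := by linarith
  have hT : T = p * A + (1 - p) * B := by
    rw [hTdef, Summable.tsum_eq_zero_add sumT]
    have h0 : pnb p (L + 1) 0 * V (v + 0) = 0 := by
      unfold pnb; rw [if_neg (by omega)]; ring
    rw [h0, zero_add]
    have hcongr : ∀ l : ℕ, pnb p (L + 1) (l + 1) * V (v + (l + 1)) =
        p * (pnb p L l * V (v + 1 + l)) + (1 - p) * (pnb p (L + 1) l * V (v + 1 + l)) := by
      intro l
      have : v + (l + 1) = v + 1 + l := by omega
      rw [this, pnb_rec p hL l]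
      ring
    rw [tsum_congr hcongr, Summable.tsum_add (sumA.mul_left p) (sumB.mul_left (1 - p)),
      tsum_mul_left, tsum_mul_left]
  have hSA : S ≤ A := by
    apply Summable.tsum_le_tsum _ sumS sumA
    intro l
    exact mul_le_mul_of_nonneg_left (hV (by omega : v + l ≤ v + 1 + l))
      (pnb_nonneg hp0.le hp1 L l)
  have hTB : T ≤ B := by
    apply Summable.tsum_le_tsum _ sumT sumB
    intro l
    exact mul_le_mul_of_nonneg_left (hV (by omega : v + l ≤ v + 1 + l))
      (pnb_nonneg hp0.le hp1 (L + 1) l)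
  nlinarith [mul_le_mul_of_nonneg_left hSA hp0.le, mul_le_mul_of_nonneg_left hTB hp1']

lemma pnb_mono {p : ℝ} (hp0 : 0 < p) (hp1 : p ≤ 1) {Lm Lj : ℕ} (hLm : 2 ≤ Lm)
    (hml : Lm ≤ Lj) (v : ℕ) {V : ℕ → ℝ} (hV : Monotone V) {M : ℝ} (hM : ∀ l, |V l| ≤ M) :
    ∑' l : ℕ, pnb p Lm l * V (v + l) ≤ ∑' l : ℕ, pnb p Lj l * V (v + l) := by
  induction Lj, hml using Nat.le_induction with
  | base => exact le_rfl
  | succ n hn ih =>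
    exact le_trans ih (pnb_step hp0 hp1 (le_trans hLm hn) v hV hM)

/-- Dominant competing action: the discounted one-stage value of scheduling the
competing source with the shorter update is no larger than that of the longer
one. -/
theorem dominant_competing_action (p : ℝ) (hp0 : 0 < p) (hp1 : p ≤ 1)
    (Lm Lj : ℕ) (hLm : 2 ≤ Lm) (hml : Lm ≤ Lj)
    (α β : ℝ) (hα : 0 ≤ α) (hβ0 : 0 ≤ β) (hβ1 : β ≤ 1) (v : ℕ)
    (V : ℕ → ℝ) (hV : Monotone V) (hbdd : ∃ M : ℝ, ∀ l, |V l| ≤ M) :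
    α * ((v : ℝ) * (Lm : ℝ) + (Lm : ℝ) * ((Lm : ℝ) - 1) / (2 * p))
        + β * p * ∑' l : ℕ, pnb p Lm l * V (v + l)
      ≤ α * ((v : ℝ) * (Lj : ℝ) + (Lj : ℝ) * ((Lj : ℝ) - 1) / (2 * p))
        + β * p * ∑' l : ℕ, pnb p Lj l * V (v + l) := by
  obtain ⟨M, hM⟩ := hbdd
  have hcast : (Lm : ℝ) ≤ (Lj : ℝ) := Nat.cast_le.mpr hml
  have h2 : (2 : ℝ) ≤ (Lm : ℝ) := by exact_mod_cast hLm
  have hstage : (v : ℝ) * (Lm : ℝ) + (Lm : ℝ) * ((Lm : ℝ) - 1) / (2 * p)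
      ≤ (v : ℝ) * (Lj : ℝ) + (Lj : ℝ) * ((Lj : ℝ) - 1) / (2 * p) := by
    apply add_le_add
    · exact mul_le_mul_of_nonneg_left hcast (by positivity)
    · apply div_le_div_of_nonneg_right ?_ (by positivity)
      nlinarith
  have hsum := pnb_mono hp0 hp1 hLm hml v hV hM
  exact add_le_add (mul_le_mul_of_nonneg_left hstage hα)
    (mul_le_mul_of_nonneg_left hsum (by positivity))
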